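/- In the min-cost augmentation reduction from monotone 1-in-3 SAT, the base graph G admits no popular matching: with a single copy of every item, the three people a1^i, a2^i, a3^i of any clause gadget have f-item p_i and s-item q_i only, so no matching can be popular. -/

import Mathlib

/-- Person `a` prefers matching `M` to `M'`. -/
def Prefers {α β : Type*} (rank : α → β → ℕ∞) (M M' : α → Option β) (a : α) : Prop :=
  (∃ b, M a = some b ∧ M' a = none) ∨
  (∃ b b', M a = some b ∧ M' a = some b' ∧ rank a b < rank a b')

/-- `M'` is more popular than `M`. -/
def MorePopular {α β : Type*} [Fintype α] (rank : α → β → ℕ∞) (M' M : α → Option β) : Prop :=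
  Nat.card {a // Prefers rank M M' a} < Nat.card {a // Prefers rank M' M a}

/-- `(a,b)` is an edge of the instance: `b` is on `a`'s preference list. -/
def Edge {α β : Type*} (rank : α → β → ℕ∞) (a : α) (b : β) : Prop := rank a b ≠ ⊤

/-- Number of people matched to item `b`. -/
noncomputable def usage {α β : Type*} [Fintype α] (M : α → Option β) (b : β) : ℕ :=
  Nat.card {a // M a = some b}

/-- A matching of the instance in which each item `b` may be matched to up to
`copies b` people (`copies b = 0` means `b` is not available). -/
def IsCapMatching {α β : Type*} [Fintype α] (rank : α → β → ℕ∞) (copies : β → ℕ)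
    (M : α → Option β) : Prop :=
  (∀ a b, M a = some b → Edge rank a b) ∧ ∀ b, usage M b ≤ copies b

/-- A popular matching of the capacitated instance. -/
def PopularCap {α β : Type*} [Fintype α] (rank : α → β → ℕ∞) (copies : β → ℕ)
    (M : α → Option β) : Prop :=
  IsCapMatching rank copies M ∧
  ∀ M', IsCapMatching rank copies M' → ¬ MorePopular rank M' M

/-- A 1-in-3 satisfying assignment: exactly one literal of every clause is true. -/
def ExactlyOneTrue {n : ℕ} {m : ℕ} (cl : Fin m → Fin 3 → Fin n) (τ : Fin n → Bool) : Prop :=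
  ∀ i, ∃! k : Fin 3, τ (cl i k) = true

/-- People of the min-cost augmentation construction: `Sum.inl (i,k)` (k = 0..5) are the
6 people of the clause-`i` gadget, and `Sum.inr j` is the person `x_j` of variable `X_j`. -/
abbrev AugPeople (m n : ℕ) := (Fin m × Fin 6) ⊕ Fin n

/-- Items: `Sum.inl (i,0) = p_i`, `Sum.inl (i,1) = q_i`, `Sum.inl (i,2) = r_i` are the
internal items of clause `i`, and `Sum.inr j = u_j` is the public item of variable `X_j`. -/
abbrev AugItems (m n : ℕ) := (Fin m × Fin 3) ⊕ Fin n

/-- Preference lists (Fig. 2): for clause `Cᵢ = (X_{j₁} ∨ X_{j₂} ∨ X_{j₃})`, people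
`a₁..a₃` have lists `(p_i, u_{j_k}, q_i)` and people `a₄..a₆` have lists `(r_i, u_{j_k})`
for `k = 1,2,3`; person `x_j` has the single-item list `(u_j)`. -/
def augRank {m n : ℕ} (cl : Fin m → Fin 3 → Fin n) :
    AugPeople m n → AugItems m n → ℕ∞ := fun a b =>
  match a with
  | Sum.inl ik =>
      let i := ik.1
      let k : ℕ := (ik.2 : ℕ)
      match b with
      | Sum.inl it =>
          if it.1 = i then
            (if k ≤ 2 ∧ (it.2 : ℕ) = 0 then 1
             else if k ≤ 2 ∧ (it.2 : ℕ) = 1 then 3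
             else if 3 ≤ k ∧ (it.2 : ℕ) = 2 then 1
             else ⊤)
          else ⊤
      | Sum.inr u =>
          if k = 0 ∨ k = 3 then (if u = cl i 0 then 2 else ⊤)
          else if k = 1 ∨ k = 4 then (if u = cl i 1 then 2 else ⊤)
          else if k = 2 ∨ k = 5 then (if u = cl i 2 then 2 else ⊤)
          else ⊤
  | Sum.inr j =>
      match b with
      | Sum.inl _ => ⊤
      | Sum.inr u => if u = j then 1 else ⊤

/-- Costs per extra copy: each internal item `p_i, q_i, r_i` costs 2, each public item
`u_j` costs 1. -/
def augCostFn {m n : ℕ} : AugItems m n → ℕ := fun b =>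
  match b with
  | Sum.inl _ => 2
  | Sum.inr _ => 1

/-- Cost of an augmentation `extra` (number of extra copies of each item). -/
def augCost {m n : ℕ} (extra : AugItems m n → ℕ) : ℕ :=
  ∑ b : AugItems m n, extra b * augCostFn b

/-!
Fix one clause. With one copy of every item, the people `a₁, a₂, a₃` of its gadget compete for
the single copies of their common first choice `p` and last choice `q`. In a popular matching
`p` is taken, by `a_r` say. Another `a_k` cannot hold its `u_{j_k}`: then `x_{j_k}` is idle and
the shift `x_{j_k} ← u_{j_k}`, `a_k ← p`, `a_r ← ∅` wins two votes to one. So the other two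
people hold `q` or nothing; if neither holds `q`, giving it to one of them is an improvement,
and otherwise the shift `a_t ← q`, `a_s ← p`, `a_r ← ∅` wins two votes to one.
-/

open Function

section Preference

variable {α β : Type*} {rank : α → β → ℕ∞} {M M' : α → Option β} {a : α}

lemma not_prefers_of_eq (h : M a = M' a) : ¬ Prefers rank M M' a := by
  rintro (⟨b, hb, hb'⟩ | ⟨b, b', hb, hb', hlt⟩)
  · simp_all
  · rw [h, hb'] at hb
    cases hb
    exact lt_irrefl _ hlt

lemma Prefers.not_prefers (h : Prefers rank M M' a) : ¬ Prefers rank M' M a := by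
  rcases h with ⟨b, hb, hb'⟩ | ⟨b, b', hb, hb', hlt⟩ <;>
    rintro (⟨c, hc, hc'⟩ | ⟨c, c', hc, hc', hlt'⟩) <;> simp_all
  exact lt_asymm hlt hlt'

lemma morePopular_of_card_lt [Fintype α] (S T : Finset α)
    (hS : ∀ a, Prefers rank M M' a → a ∈ S) (hT : ∀ a ∈ T, Prefers rank M' M a)
    (hST : S.card < T.card) : MorePopular rank M' M := by
  classical
  unfold MorePopular
  rw [Nat.card_eq_fintype_card, Nat.card_eq_fintype_card, Fintype.card_subtype,
    Fintype.card_subtype]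
  calc _ ≤ S.card := Finset.card_le_card fun a ha => hS a (Finset.mem_filter.1 ha).2
    _ < T.card := hST
    _ ≤ _ := Finset.card_le_card fun a ha => Finset.mem_filter.2 ⟨Finset.mem_univ a, hT a ha⟩

end Preference

section Matching

variable {α β : Type*} [Fintype α] {rank : α → β → ℕ∞} {copies : β → ℕ} {M : α → Option β}
  {a : α} {b : β}

lemma usage_eq_ncard (M : α → Option β) (b : β) : usage M b = {a | M a = some b}.ncard :=
  Nat.card_coe_set_eq _

lemma usage_eq_zero_iff : usage M b = 0 ↔ ∀ a, M a ≠ some b := by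
  rw [usage_eq_ncard, Set.ncard_eq_zero, Set.eq_empty_iff_forall_notMem]
  rfl

lemma IsCapMatching.eq_of_eq_some (hM : IsCapMatching rank (fun _ => 1) M) {a a' : α}
    (ha : M a = some b) (ha' : M a' = some b) : a = a' := by
  have h := hM.2 b
  rw [usage_eq_ncard, Set.ncard_le_one_iff] at h
  exact h ha ha'

lemma usage_comp_perm (M : α → Option β) (σ : Equiv.Perm α) (b : β) :
    usage (M ∘ σ) b = usage M b :=
  Nat.card_congr (σ.subtypeEquiv fun _ => Iff.rfl)

lemma IsCapMatching.comp_perm (hM : IsCapMatching rank copies M) (σ : Equiv.Perm α)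
    (hσ : ∀ a b, M (σ a) = some b → Edge rank a b) : IsCapMatching rank copies (M ∘ σ) :=
  ⟨hσ, fun b => (usage_comp_perm M σ b).trans_le (hM.2 b)⟩

variable [DecidableEq α]

lemma usage_update_le_succ (M : α → Option β) (a : α) (o : Option β) (b : β) :
    usage (update M a o) b ≤ usage M b + 1 := by
  rw [usage_eq_ncard, usage_eq_ncard]
  refine (Set.ncard_le_ncard fun z hz => ?_).trans (Set.ncard_insert_le a _)
  by_cases hza : z = a
  · exact Or.inl hza
  · exact Or.inr (by simpa [update_of_ne hza] using hz)

lemma usage_update_le_of_ne (M : α → Option β) (a : α) {o : Option β} (ho : o ≠ some b) :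
    usage (update M a o) b ≤ usage M b := by
  rw [usage_eq_ncard, usage_eq_ncard]
  refine Set.ncard_le_ncard fun z hz => ?_
  by_cases hza : z = a
  · subst hza
    exact absurd (by simpa using hz) ho
  · simpa [update_of_ne hza] using hz

lemma IsCapMatching.update_some (hM : IsCapMatching rank copies M) (hab : Edge rank a b)
    (hb : usage M b < copies b) : IsCapMatching rank copies (update M a (some b)) := by
  refine ⟨fun z c hz => ?_, fun c => ?_⟩
  · by_cases hza : z = a
    · subst hza
      cases (update_self z (some b) M).symm.trans hz
      exact hab
    · exact hM.1 z c (by rwa [update_of_ne hza] at hz)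
  · by_cases hcb : c = b
    · subst hcb
      exact (usage_update_le_succ M a _ c).trans hb
    · exact (usage_update_le_of_ne M a (by simpa using Ne.symm hcb)).trans (hM.2 c)

lemma PopularCap.not_prefers_update (hM : PopularCap rank copies M) (hab : Edge rank a b)
    (hb : usage M b < copies b) : ¬ Prefers rank (update M a (some b)) M a := fun ha =>
  hM.2 _ (hM.1.update_some hab hb) <| morePopular_of_card_lt ∅ {a}
    (fun z hz => by
      by_cases hza : z = a
      · exact absurd hz (hza ▸ ha.not_prefers)
      · exact absurd hz (not_prefers_of_eq (update_of_ne hza _ M).symm))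
    (by simpa using ha) (by simp)

/-- Shifting along the alternating path `y - c - s - p - r` makes `s` and `y` better off at the
expense of `r` alone. -/
lemma PopularCap.not_rank_lt_of_shift {r s y : α} {p c : β} (hM : PopularCap rank copies M)
    (hr : M r = some p) (hs : M s = some c) (hy : M y = none) (hsp : Edge rank s p)
    (hyc : Edge rank y c) : ¬ rank s p < rank s c := by
  intro hlt
  have hrs : r ≠ s := by rintro rfl; cases hr.symm.trans hs; exact lt_irrefl _ hlt
  have hry : r ≠ y := by rintro rfl; simp_all
  have hsy : s ≠ y := by rintro rfl; simp_all
  set σ := Equiv.swap r s * Equiv.swap r y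
  have hσs : σ s = r := by simp [σ, Equiv.swap_apply_of_ne_of_ne hrs.symm hsy]
  have hσy : σ y = s := by simp [σ]
  have hσr : σ r = y := by simp [σ, Equiv.swap_apply_of_ne_of_ne hry.symm hsy.symm]
  have hσ : ∀ z, z ≠ r → z ≠ s → z ≠ y → σ z = z := fun z h1 h2 h3 => by
    simp [σ, Equiv.swap_apply_of_ne_of_ne h1 h3, Equiv.swap_apply_of_ne_of_ne h1 h2]
  have hs' : Prefers rank (M ∘ σ) M s := Or.inr ⟨p, c, by simp [hσs, hr], hs, hlt⟩
  have hy' : Prefers rank (M ∘ σ) M y := Or.inl ⟨c, by simp [hσy, hs], hy⟩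
  refine hM.2 _ (hM.1.comp_perm σ fun z b hz => ?_) <| morePopular_of_card_lt {r} {s, y}
    (fun z hz => ?_) (by simp [hs', hy']) (by simp [Finset.card_pair hsy])
  · by_cases h1 : z = r
    · simp [h1, hσr, hy] at hz
    by_cases h2 : z = s
    · subst h2; rw [hσs, hr] at hz; cases hz; exact hsp
    by_cases h3 : z = y
    · subst h3; rw [hσy, hs] at hz; cases hz; exact hyc
    exact hM.1.1 z b (by simpa [hσ z h1 h2 h3] using hz)
  · by_cases h1 : z = r
    · simp [h1]
    by_cases h2 : z = s
    · exact absurd hz (h2 ▸ hs'.not_prefers)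
    by_cases h3 : z = y
    · exact absurd hz (h3 ▸ hy'.not_prefers)
    exact absurd hz (not_prefers_of_eq (by simp [hσ z h1 h2 h3]))

end Matching

/-- The people `a₁, a₂, a₃` of a clause gadget, with `f`-item `p` and `s`-item `q`, together with
the people `x_{j_k}` whose whole list is `u_{j_k}`. -/
structure ClauseGadget {α β : Type*} (rank : α → β → ℕ∞) (a x : Fin 3 → α) (p q : β)
    (u : Fin 3 → β) : Prop where
  injective : Injective a
  rank_p_lt : ∀ k, rank (a k) p < rank (a k) (u k)
  rank_u_lt : ∀ k, rank (a k) (u k) < rank (a k) q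
  edge_q : ∀ k, Edge rank (a k) q
  edge_x : ∀ k, Edge rank (x k) (u k)
  eq_of_edge : ∀ k b, Edge rank (a k) b → b = p ∨ b = q ∨ b = u k
  eq_of_edge_x : ∀ k b, Edge rank (x k) b → b = u k
  exists_eq_of_edge_p : ∀ z, Edge rank z p → ∃ k, a k = z
  exists_eq_of_edge_q : ∀ z, Edge rank z q → ∃ k, a k = z

namespace ClauseGadget

variable {α β : Type*} {rank : α → β → ℕ∞} {a x : Fin 3 → α} {p q : β} {u : Fin 3 → β}

lemma edge_p (g : ClauseGadget rank a x p q u) (k : Fin 3) : Edge rank (a k) p :=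
  ((g.rank_p_lt k).trans (g.rank_u_lt k)).ne_top

lemma p_ne_q (g : ClauseGadget rank a x p q u) : p ≠ q := fun h =>
  ((g.rank_p_lt 0).trans (g.rank_u_lt 0)).ne (by rw [h])

variable [Fintype α] [DecidableEq α] {M : α → Option β}

lemma exists_eq_some_p (g : ClauseGadget rank a x p q u)
    (hM : PopularCap rank (fun _ => 1) M) : ∃ r, M (a r) = some p := by
  by_contra! hfree
  have hp : usage M p = 0 := usage_eq_zero_iff.2 fun z hz => by
    obtain ⟨k, rfl⟩ := g.exists_eq_of_edge_p z (hM.1.1 z p hz)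
    exact hfree k hz
  refine hM.not_prefers_update (g.edge_p 0) (by simp [hp]) ?_
  rcases h0 : M (a 0) with _ | b
  · exact Or.inl ⟨p, update_self _ _ _, h0⟩
  refine Or.inr ⟨p, b, update_self _ _ _, h0, ?_⟩
  rcases g.eq_of_edge 0 b (hM.1.1 _ b h0) with rfl | rfl | rfl
  · exact absurd h0 (hfree 0)
  · exact (g.rank_p_lt 0).trans (g.rank_u_lt 0)
  · exact g.rank_p_lt 0

/-- If `a k` held `u k`, then `x k` would be unmatched and `a k` could move up to `p`. -/
lemma eq_none_or_eq_some_q (g : ClauseGadget rank a x p q u)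
    (hM : PopularCap rank (fun _ => 1) M) {r k : Fin 3} (hr : M (a r) = some p) (hk : k ≠ r) :
    M (a k) = none ∨ M (a k) = some q := by
  rcases hMk : M (a k) with _ | b
  · exact Or.inl rfl
  rcases g.eq_of_edge k b (hM.1.1 _ b hMk) with rfl | rfl | rfl
  · exact absurd (g.injective (hM.1.eq_of_eq_some hMk hr)) hk
  · exact Or.inr rfl
  have hx : M (x k) = none := by
    rcases hxk : M (x k) with _ | b
    · rfl
    obtain rfl := g.eq_of_edge_x k b (hM.1.1 _ b hxk)
    have hak := (hM.1.eq_of_eq_some hxk hMk) ▸ g.edge_p k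
    exact absurd (congrArg _ (g.eq_of_edge_x k p hak)) (g.rank_p_lt k).ne
  exact absurd (g.rank_p_lt k) (hM.not_rank_lt_of_shift hr hMk hx (g.edge_p k) (g.edge_x k))

theorem not_popularCap (g : ClauseGadget rank a x p q u) (M : α → Option β) :
    ¬ PopularCap rank (fun _ => 1) M := by
  intro hM
  obtain ⟨r, hr⟩ := g.exists_eq_some_p hM
  by_cases hq : ∃ s ≠ r, M (a s) = some q
  · obtain ⟨s, hsr, hs⟩ := hq
    obtain ⟨t, htr, hts⟩ := (by decide : ∀ r s : Fin 3, ∃ t, t ≠ r ∧ t ≠ s) r s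
    have ht : M (a t) = none := (g.eq_none_or_eq_some_q hM hr htr).resolve_right
      fun ht => hts (g.injective (hM.1.eq_of_eq_some ht hs))
    exact hM.not_rank_lt_of_shift hr hs ht (g.edge_p s) (g.edge_q t)
      ((g.rank_p_lt s).trans (g.rank_u_lt s))
  · push Not at hq
    obtain ⟨s, hsr⟩ := exists_ne r
    have hs : M (a s) = none := (g.eq_none_or_eq_some_q hM hr hsr).resolve_right (hq s hsr)
    have hqfree : usage M q = 0 := usage_eq_zero_iff.2 fun z hz => by
      obtain ⟨k, rfl⟩ := g.exists_eq_of_edge_q z (hM.1.1 z q hz)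
      by_cases hk : k = r
      · exact g.p_ne_q (Option.some_inj.1 ((hk ▸ hr).symm.trans hz))
      · exact hq k hk hz
    exact hM.not_prefers_update (g.edge_q s) (by simp [hqfree]) (Or.inl ⟨q, update_self _ _ _, hs⟩)

end ClauseGadget

section Reduction

variable {m n : ℕ}

/-- The person `a_{k+1}` of the gadget of clause `i`. -/
def clausePerson (i : Fin m) (k : Fin 3) : AugPeople m n :=
  Sum.inl (i, Fin.castLE (by norm_num) k)

lemma clauseGadget_augRank (cl : Fin m → Fin 3 → Fin n) (i : Fin m) :
    ClauseGadget (augRank cl) (clausePerson i) (fun k => Sum.inr (cl i k)) (Sum.inl (i, 0))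
      (Sum.inl (i, 1)) (fun k => Sum.inr (cl i k)) where
  injective k k' h := by simpa [clausePerson] using h
  rank_p_lt k := by fin_cases k <;> simp [augRank, clausePerson]
  rank_u_lt k := by fin_cases k <;> simp [augRank, clausePerson] <;> norm_num
  edge_q k := by fin_cases k <;> simp [augRank, clausePerson, Edge]
  edge_x k := by simp [augRank, Edge]
  eq_of_edge k b h := by
    rcases b with ⟨i', t⟩ | j <;> fin_cases k <;> try fin_cases t
    all_goals simp_all [augRank, clausePerson, Edge]
  eq_of_edge_x k b h := by
    rcases b with _ | j <;> simp_all [augRank, Edge]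
  exists_eq_of_edge_p z h := by
    rcases z with ⟨i', t⟩ | j <;> try fin_cases t
    all_goals simp_all [augRank, clausePerson, Edge] <;> decide
  exists_eq_of_edge_q z h := by
    rcases z with ⟨i', t⟩ | j <;> try fin_cases t
    all_goals simp_all [augRank, clausePerson, Edge] <;> decide

end Reduction

theorem aug_base_graph_has_no_popular_matching_general {m n : ℕ} (hm : 0 < m)
    (cl : Fin m → Fin 3 → Fin n) :
    ¬ ∃ M : AugPeople m n → Option (AugItems m n),
        PopularCap (augRank cl) (fun _ => 1) M := fun ⟨M, hM⟩ =>
  (clauseGadget_augRank cl ⟨0, hm⟩).not_popularCap M hM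

/-- The base graph of the min-cost augmentation reduction (a single copy of every item)
admits no popular matching. -/
theorem aug_base_graph_has_no_popular_matching {m n : ℕ} (hm : 0 < m)
    (cl : Fin m → Fin 3 → Fin n) (hdist : ∀ i, Function.Injective (cl i)) :
    ¬ ∃ M : AugPeople m n → Option (AugItems m n),
        PopularCap (augRank cl) (fun _ => 1) M :=
  aug_base_graph_has_no_popular_matching_general hm cl
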